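/- arXiv:1005.1733 — 2 statements merged into one kernel-verified Lean document; each statement's English description precedes it below -/
import Mathlib

section
/- In the ring R_{n+1} (the quotient of Z[(Z/d)^{n+1}] by the relations Σ_{k=0}^{d-1} u_ν^k = 0 for each ν), with v_n = u_1⋯u_n and v = v_n·u_{n+1}, one has the identity Σ_{k=0}^{d-1} v^k = (1 − v_n) · Σ_{0≤k≤l≤d−2} u_{n+1}^k v_n^l. -/
set_option maxHeartbeats 1000000

open MonoidAlgebra Finset

/-- The generator `u_ν` of the integral group ring of `(ℤ/d)^m`. -/
noncomputable def uGen (d m : ℕ) (ν : Fin m) :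
    MonoidAlgebra ℤ (Multiplicative (Fin m → ZMod d)) :=
  MonoidAlgebra.of ℤ (Multiplicative (Fin m → ZMod d))
    (Multiplicative.ofAdd (Pi.single ν 1))

/-- The ideal generated by the elements `∑_{k<d} u_ν^k`, `ν = 1, …, m`. -/
noncomputable def relId (d m : ℕ) :
    Ideal (MonoidAlgebra ℤ (Multiplicative (Fin m → ZMod d))) :=
  Ideal.span {x | ∃ ν : Fin m, x = ∑ k ∈ Finset.range d, uGen d m ν ^ k}

/-- The ring `R_m = ℤ[(ℤ/d)^m]/(∑_{k<d} u_ν^k : ν = 1,…,m)`. -/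
abbrev R (d m : ℕ) := MonoidAlgebra ℤ (Multiplicative (Fin m → ZMod d)) ⧸ relId d m

/-- The image of `u_ν` in `R_m`. -/
noncomputable def uR (d m : ℕ) (ν : Fin m) : R d m :=
  Ideal.Quotient.mk (relId d m) (uGen d m ν)

/-- `v_n = u_1 ⋯ u_n`, viewed inside `R_{n+1}` (the product of the first `n` generators). -/
noncomputable def vR (d n : ℕ) : R d (n + 1) :=
  ∏ ν : Fin n, uR d (n + 1) ν.castSucc

/-! Multiplying out, `(1 - w) ∑_{l<d-1} (∑_{k≤l} u^k) w^l` telescopes to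
`∑_{l<d} (u w)^l - (∑_{k<d} u^k) w^(d-1)`, and the correction term vanishes in `R_{n+1}`
because `∑_{k<d} u_{n+1}^k` is one of the defining relations. -/

section GeomSum

variable {A : Type*} [CommRing A]

theorem one_sub_mul_sum_geom_sum_mul_pow (u w : A) (m : ℕ) :
    (1 - w) * ∑ l ∈ range m, (∑ k ∈ range (l + 1), u ^ k) * w ^ l =
      ∑ l ∈ range (m + 1), (u * w) ^ l - (∑ k ∈ range (m + 1), u ^ k) * w ^ m := by
  induction m with
  | zero => simp
  | succ m ih =>
    rw [sum_range_succ, mul_add, ih, sum_range_succ _ (m + 1),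
      sum_range_succ (fun k => u ^ k) (m + 1), mul_pow]
    ring

theorem geom_sum_mul_eq_of_geom_sum_eq_zero {u : A} {d : ℕ}
    (hu : ∑ k ∈ range d, u ^ k = 0) (w : A) :
    ∑ k ∈ range d, (w * u) ^ k =
      (1 - w) * ∑ l ∈ range (d - 1), ∑ k ∈ range (l + 1), u ^ k * w ^ l := by
  cases d with
  | zero => simp
  | succ m =>
    simp only [Nat.add_sub_cancel, ← sum_mul, one_sub_mul_sum_geom_sum_mul_pow, hu, zero_mul,
      sub_zero, mul_comm w]

end GeomSum

theorem geom_sum_uR_eq_zero (d m : ℕ) (ν : Fin m) : ∑ k ∈ range d, uR d m ν ^ k = 0 := by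
  have hmem : ∑ k ∈ range d, uGen d m ν ^ k ∈ relId d m := Ideal.subset_span ⟨ν, rfl⟩
  simpa only [uR, map_sum, map_pow] using Ideal.Quotient.eq_zero_iff_mem.2 hmem

theorem stmt1_general (d n : ℕ) :
    ∑ k ∈ Finset.range d, (vR d n * uR d (n + 1) (Fin.last n)) ^ k =
      (1 - vR d n) *
        ∑ l ∈ Finset.range (d - 1), ∑ k ∈ Finset.range (l + 1),
          uR d (n + 1) (Fin.last n) ^ k * vR d n ^ l :=
  geom_sum_mul_eq_of_geom_sum_eq_zero (geom_sum_uR_eq_zero d (n + 1) (Fin.last n)) (vR d n)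

/-- in `R_{n+1}`, with `v_n = u_1⋯u_n` and `v = v_n u_{n+1}`, one has
`∑_{k<d} v^k = (1 - v_n) ∑_{0 ≤ k ≤ l ≤ d-2} u_{n+1}^k v_n^l`. -/
theorem stmt1 (d n : ℕ) (hd : 3 ≤ d) (hn : 1 ≤ n) :
    ∑ k ∈ Finset.range d, (vR d n * uR d (n + 1) (Fin.last n)) ^ k =
      (1 - vR d n) *
        ∑ l ∈ Finset.range (d - 1), ∑ k ∈ Finset.range (l + 1),
          uR d (n + 1) (Fin.last n) ^ k * vR d n ^ l :=
  stmt1_general d n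
end

section
/- Any homogeneous polynomial of degree d in the variables Z_0,...,Z_{n+1} that is invariant under the group G_k = S_k ⋉ μ_d^k (acting on the last k variables by permutations and by multiplication by d-th roots of unity) is the sum of a homogeneous degree-d polynomial in Z_0,...,Z_{n+1−k} and a scalar multiple of the Fermat form F_k = Z_{n+2−k}^d + ⋯ + Z_{n+1}^d. -/
set_option maxHeartbeats 1000000

open MvPolynomial Finset

lemma scale_coeff {N : ℕ} (c : Fin N → ℂ) (P : MvPolynomial (Fin N) ℂ) (m : Fin N →₀ ℕ) :
    coeff m (aeval (fun i : Fin N => C (c i) * X i) P) = (∏ i : Fin N, c i ^ m i) * coeff m P := by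
  have hmono : ∀ m' : Fin N →₀ ℕ, ∀ b : ℂ,
      (aeval (fun i : Fin N => C (c i) * X i)) (monomial m' b)
        = monomial m' ((∏ i : Fin N, c i ^ m' i) * b) := by
    intro m' b
    rw [aeval_monomial]
    have h1 : (m'.prod fun i e => (C (c i) * X i : MvPolynomial (Fin N) ℂ) ^ e)
        = C (∏ i : Fin N, c i ^ m' i) * (m'.prod fun i e => (X i : MvPolynomial (Fin N) ℂ) ^ e) := by
      rw [Finsupp.prod, Finsupp.prod]
      have : ∀ i ∈ m'.support, (C (c i) * X i : MvPolynomial (Fin N) ℂ) ^ m' i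
          = C (c i ^ m' i) * X i ^ m' i := by
        intro i _; rw [mul_pow, C_pow]
      rw [Finset.prod_congr rfl this, Finset.prod_mul_distrib, ← map_prod]
      congr 2
      exact Finset.prod_subset (Finset.subset_univ _) (fun i _ hi => by
        rw [Finsupp.notMem_support_iff.mp hi, pow_zero])
    rw [h1, monomial_eq, algebraMap_eq, map_mul]
    ring
  conv_lhs => rw [P.as_sum]
  rw [map_sum]
  simp_rw [hmono]
  rw [coeff_sum]
  simp_rw [coeff_monomial]
  rw [Finset.sum_ite_eq' P.support m (fun m' => (∏ i : Fin N, c i ^ m' i) * coeff m' P)]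
  split_ifs with h
  · rfl
  · simp [notMem_support_iff.mp h]

/-- any degree-`d` homogeneous polynomial in `Z_0,…,Z_{n+1}` invariant
under `G_k = S_k ⋉ μ_d^k` (acting on the last `k` variables by permutations and by
scalings by `d`-th roots of unity) is the sum of a degree-`d` homogeneous polynomial in
`Z_0,…,Z_{n+1-k}` and a scalar multiple of the Fermat form
`F_k = Z_{n+2-k}^d + ⋯ + Z_{n+1}^d`. -/
theorem stmt11 (d n k : ℕ) (hd : 3 ≤ d) (hk : 1 ≤ k) (hkn : k ≤ n + 1)
    (P : MvPolynomial (Fin (n + 2)) ℂ) (hP : P.IsHomogeneous d)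
    (hperm : ∀ σ : Equiv.Perm (Fin (n + 2)),
      (∀ i : Fin (n + 2), (i : ℕ) < n + 2 - k → σ i = i) → rename σ P = P)
    (hscale : ∀ c : Fin (n + 2) → ℂ,
      (∀ i : Fin (n + 2), (i : ℕ) < n + 2 - k → c i = 1) →
      (∀ i : Fin (n + 2), c i ^ d = 1) →
      aeval (fun i : Fin (n + 2) => C (c i) * X i) P = P) :
    ∃ (Q : MvPolynomial (Fin (n + 2)) ℂ) (a : ℂ),
      Q.IsHomogeneous d ∧
      (∀ m ∈ Q.support, ∀ i : Fin (n + 2), n + 2 - k ≤ (i : ℕ) → m i = 0) ∧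
      P = Q + C a * ∑ i ∈ Finset.univ.filter (fun i : Fin (n + 2) => n + 2 - k ≤ (i : ℕ)),
        X i ^ d := by
  have hd0 : d ≠ 0 := by omega
  set r := n + 2 - k with hr
  obtain ⟨ζ, hζ⟩ : ∃ ζ : ℂ, IsPrimitiveRoot ζ d :=
    ⟨_, Complex.isPrimitiveRoot_exp d hd0⟩
  -- degrees sum to d
  have hdeg : ∀ m ∈ P.support, (∑ j : Fin (n + 2), m j) = d := by
    intro m hm
    have h1 := hP (mem_support_iff.mp hm)
    rw [← h1]
    simp [Finsupp.weight, Finsupp.linearCombination, Finsupp.sum]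
    exact (Finset.sum_subset (Finset.subset_univ _) (fun i _ hi => by
      simp [Finsupp.notMem_support_iff.mp hi])).symm
  -- divisibility
  have hdvd : ∀ m ∈ P.support, ∀ i : Fin (n + 2), r ≤ (i : ℕ) → d ∣ m i := by
    intro m hm i hi
    set c : Fin (n + 2) → ℂ := fun j => if j = i then ζ else 1 with hc
    have h1 : ∀ j : Fin (n + 2), (j : ℕ) < r → c j = 1 := by
      intro j hj
      simp only [hc]
      rw [if_neg]
      intro h; subst h; omega
    have h2 : ∀ j : Fin (n + 2), c j ^ d = 1 := by
      intro j
      by_cases hji : j = i <;> simp [hc, hji, hζ.pow_eq_one]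
    have heq := hscale c h1 h2
    have hcoeff := scale_coeff c P m
    rw [heq] at hcoeff
    have hprod : (∏ j : Fin (n + 2), c j ^ m j) = ζ ^ m i := by
      rw [Fintype.prod_eq_single i (fun j hj => by simp [hc, hj])]
      simp [hc]
    rw [hprod] at hcoeff
    have hco : coeff m P ≠ 0 := mem_support_iff.mp hm
    have h1eq : ζ ^ m i = 1 := by
      have : ζ ^ m i * coeff m P = 1 * coeff m P := by rw [one_mul, ← hcoeff]
      exact mul_right_cancel₀ hco this
    exact (hζ.pow_eq_one_iff_dvd _).mp h1eq
  -- structure of monomials touching the zone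
  have hform : ∀ m ∈ P.support, ∀ i : Fin (n + 2), r ≤ (i : ℕ) → m i ≠ 0 →
      m = Finsupp.single i d := by
    intro m hm i hi hmi
    have hdvdi := hdvd m hm i hi
    have hle : m i ≤ d := by
      rw [← hdeg m hm]
      exact Finset.single_le_sum (fun j _ => Nat.zero_le _) (Finset.mem_univ i)
    have hmid : m i = d := Nat.le_antisymm hle (Nat.le_of_dvd (Nat.pos_of_ne_zero hmi) hdvdi)
    have hrest : ∀ j : Fin (n + 2), j ≠ i → m j = 0 := by
      intro j hj
      by_contra hj0
      have hbig : d + 1 ≤ ∑ l : Fin (n + 2), m l := by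
        calc d + 1 ≤ m i + m j := by omega
        _ = ∑ l ∈ ({i, j} : Finset (Fin (n + 2))), m l := by
            rw [Finset.sum_pair (Ne.symm hj)]
        _ ≤ ∑ l : Fin (n + 2), m l :=
            Finset.sum_le_sum_of_subset (Finset.subset_univ _)
      rw [hdeg m hm] at hbig
      omega
    ext j
    by_cases hji : j = i
    · subst hji; simpa [Finsupp.single_apply] using hmid
    · rw [hrest j hji, Finsupp.single_apply, if_neg (fun h => hji h.symm)]
  -- equal coefficients on the zone
  have hsame : ∀ i j : Fin (n + 2), r ≤ (i : ℕ) → r ≤ (j : ℕ) →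
      coeff (Finsupp.single i d) P = coeff (Finsupp.single j d) P := by
    intro i j hi hj
    by_cases hij : i = j
    · rw [hij]
    have hfix : ∀ l : Fin (n + 2), (l : ℕ) < r → Equiv.swap i j l = l := by
      intro l hl
      apply Equiv.swap_apply_of_ne_of_ne
      · intro h; subst h; omega
      · intro h; subst h; omega
    have hren := hperm (Equiv.swap i j) hfix
    have hcr := coeff_rename_mapDomain (Equiv.swap i j) (Equiv.swap i j).injective P
      (Finsupp.single i d)
    rw [hren, Finsupp.mapDomain_single, Equiv.swap_apply_left] at hcr
    exact hcr.symm
  -- the scalar and the remainder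
  have hlast : r ≤ ((⟨n + 1, by omega⟩ : Fin (n + 2)) : ℕ) := by simp; omega
  set i₀ : Fin (n + 2) := ⟨n + 1, by omega⟩ with hi₀
  set a : ℂ := coeff (Finsupp.single i₀ d) P with ha
  set S : MvPolynomial (Fin (n + 2)) ℂ :=
    ∑ i ∈ Finset.univ.filter (fun i : Fin (n + 2) => r ≤ (i : ℕ)), X i ^ d with hS
  have hShom : S.IsHomogeneous d := by
    apply IsHomogeneous.sum
    intro i _
    simpa using (isHomogeneous_X ℂ i).pow d
  set Q : MvPolynomial (Fin (n + 2)) ℂ := P - C a * S with hQ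
  refine ⟨Q, a, ?_, ?_, by rw [hQ]; ring⟩
  · apply hP.sub
    simpa using (isHomogeneous_C _ a).mul hShom
  · intro m hm i hi
    by_contra hmi
    have hmQ : coeff m Q ≠ 0 := mem_support_iff.mp hm
    have hQc : coeff m Q = coeff m P - a * coeff m S := by
      rw [hQ, coeff_sub, coeff_C_mul]
    have hSc : ∀ m' : Fin (n + 2) →₀ ℕ, coeff m' S =
        ∑ j ∈ Finset.univ.filter (fun j : Fin (n + 2) => r ≤ (j : ℕ)),
          (if Finsupp.single j d = m' then (1 : ℂ) else 0) := by
      intro m'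
      rw [hS, coeff_sum]
      exact Finset.sum_congr rfl (fun j _ => coeff_X_pow j m' d)
    -- show m = single i d
    have hmform : m = Finsupp.single i d := by
      by_cases hmp : coeff m P = 0
      · have hSne : coeff m S ≠ 0 := by
          intro h0
          rw [hQc, hmp, h0, mul_zero, sub_zero] at hmQ
          exact hmQ rfl
        rw [hSc] at hSne
        obtain ⟨j, hjmem, hjne⟩ := Finset.exists_ne_zero_of_sum_ne_zero hSne
        have hjm : Finsupp.single j d = m := by
          by_contra h; rw [if_neg h] at hjne; exact hjne rfl
        have hij : j = i := by
          by_contra hij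
          apply hmi
          rw [← hjm, Finsupp.single_apply, if_neg hij]
        rw [← hjm, hij]
      · exact hform m (mem_support_iff.mpr hmp) i hi hmi
    have hS1 : coeff m S = 1 := by
      rw [hSc, Finset.sum_eq_single_of_mem i
        (Finset.mem_filter.mpr ⟨Finset.mem_univ i, hi⟩)
        (fun j _ hji => if_neg (by
          rw [hmform]
          intro h
          exact hji ((Finsupp.single_left_inj hd0).mp h)))]
      rw [hmform, if_pos rfl]
    rw [hQc, hS1, mul_one, hmform, hsame i i₀ hi hlast, ← ha, sub_self] at hmQ
    exact hmQ rfl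
end
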